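/- With the matrices defined in the context, the operator L_h := Σ_{α=1}^{3} (ρ^(−1/2) C^(α) S_comp^(−1/2)) ⊗ D^(α) satisfies ‖L_h‖ ≤ (3/h) · ρ^(−1/2) · ‖S_comp^(−1/2)‖. -/

import Mathlib

open Matrix
open scoped Matrix.Norms.L2Operator ComplexOrder Kronecker

noncomputable section

/-- The state-register index set, of cardinality `3 + 6 + 7 = 16`, corresponding to the
block partition of rows and columns into sizes `3 + 6 + 7`. -/
abbrev StateIdx : Type := Fin 3 ⊕ (Fin 6 ⊕ Fin 7)

/-- The three `3 × 6` matrices `C^(1), C^(2), C^(3)` (here indexed by `Fin 3`). -/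
def Cmat : Fin 3 → Matrix (Fin 3) (Fin 6) ℂ
  | 0 => !![1, 0, 0, 0, 0, 0; 0, 0, 0, 1, 0, 0; 0, 0, 0, 0, 1, 0]
  | 1 => !![0, 0, 0, 1, 0, 0; 0, 1, 0, 0, 0, 0; 0, 0, 0, 0, 0, 1]
  | 2 => !![0, 0, 0, 0, 1, 0; 0, 0, 0, 0, 0, 1; 0, 0, 1, 0, 0, 0]

/-- `A^(α)`: the `16 × 16` matrix with `C^(α)` as its `(1,2)` block, `(C^(α))ᵀ` as its `(2,1)`
block, and zero blocks elsewhere, in the block partition `3 + (6 + 7)`. -/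
def Amat (α : Fin 3) : Matrix StateIdx StateIdx ℂ :=
  Matrix.fromBlocks 0 (Matrix.fromCols (Cmat α) 0) (Matrix.fromRows (Cmat α)ᵀ 0) 0

/-- `B_cell = diag(ρ I₃, S_comp, I₇)`. -/
def Bcell (ρ : ℝ) (S : Matrix (Fin 6) (Fin 6) ℂ) : Matrix StateIdx StateIdx ℂ :=
  Matrix.fromBlocks ((ρ : ℂ) • 1) 0 0 (Matrix.fromBlocks S 0 0 1)

/-- The positive semidefinite square root of a positive semidefinite matrix (the definition
`Matrix.PosSemidef.sqrt` of the older Mathlib, removed since). -/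
def Matrix.PosSemidef.sqrt {n 𝕜 : Type*} [Fintype n] [DecidableEq n] [RCLike 𝕜]
    {A : Matrix n n 𝕜} (hA : A.PosSemidef) : Matrix n n 𝕜 :=
  hA.isHermitian.eigenvectorUnitary.1 *
    diagonal ((↑) ∘ Real.sqrt ∘ hA.isHermitian.eigenvalues) *
    (star hA.isHermitian.eigenvectorUnitary : Matrix n n 𝕜)

/-- `M^(−1/2)`: the inverse of the unique positive definite square root of a positive
definite matrix `M`. -/
def invSqrt {ι : Type*} [Fintype ι] [DecidableEq ι] {M : Matrix ι ι ℂ}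
    (hM : M.PosDef) : Matrix ι ι ℂ :=
  hM.posSemidef.sqrt⁻¹

/-- The spatial index set for `N` qubits, of cardinality `2^N`. -/
abbrev QubitIdx (N : ℕ) : Type := Fin N → Fin 2

def sigma01 : Matrix (Fin 2) (Fin 2) ℂ := !![0, 1; 0, 0]

def sigma10 : Matrix (Fin 2) (Fin 2) ℂ := !![0, 0; 1, 0]

/-- The Kronecker (tensor) product `f 0 ⊗ f 1 ⊗ ⋯ ⊗ f (N−1)` of a family of `2 × 2`
matrices, realized on the index set `Fin N → Fin 2` (position `0` is the leftmost factor). -/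
def tensorFamily {N : ℕ} (f : Fin N → Matrix (Fin 2) (Fin 2) ℂ) :
    Matrix (QubitIdx N) (QubitIdx N) ℂ :=
  Matrix.of fun x y => ∏ i, f i (x i) (y i)

/-- The factor at position `p ∈ {0, …, n−1}` of the pure tensor
`I₂^⊗(n−k) ⊗ a ⊗ b^⊗(k−1)` (for `1 ≤ k ≤ n`). -/
def cellFactor (n k : ℕ) (a b : Matrix (Fin 2) (Fin 2) ℂ) (p : ℕ) :
    Matrix (Fin 2) (Fin 2) ℂ :=
  if p < n - k then 1 else if p = n - k then a else b

/-- `S_k^(α) = I₂^⊗(n(α−1)) ⊗ S_k^cell ⊗ I₂^⊗(n(3−α))` with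
`S_k^cell = I₂^⊗(n−k) ⊗ σ01 ⊗ σ10^⊗(k−1) − I₂^⊗(n−k) ⊗ σ10 ⊗ σ01^⊗(k−1)`,
realized on `3n` qubits.  Here `α : Fin 3` is `0`-based and `1 ≤ k ≤ n`. -/
def Smat (n : ℕ) (α : Fin 3) (k : ℕ) :
    Matrix (QubitIdx (3 * n)) (QubitIdx (3 * n)) ℂ :=
  tensorFamily (fun i =>
      if i.val / n = α.val then cellFactor n k sigma01 sigma10 (i.val % n) else 1) -
    tensorFamily (fun i =>
      if i.val / n = α.val then cellFactor n k sigma10 sigma01 (i.val % n) else 1)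

/-- `D^(α) = (1/(2h)) ∑_{k=1}^n S_k^(α)`. -/
def Dmat (n : ℕ) (h : ℝ) (α : Fin 3) : Matrix (QubitIdx (3 * n)) (QubitIdx (3 * n)) ℂ :=
  (1 / (2 * (h : ℂ))) • ∑ k : Fin n, Smat n α (k.val + 1)

/-- The rank-one projector `P_j = |φ_j⟩⟨φ_j|`. -/
def Pmat (φ : Fin 16 → StateIdx → ℂ) (j : Fin 16) : Matrix StateIdx StateIdx ℂ :=
  Matrix.vecMulVec (φ j) (star (φ j))

/-- `H_jk^(α) := P_j^(α) ⊗ (i λ_j^(α)/(2h)) S_k^(α)`. -/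
def Hterm (n : ℕ) (h : ℝ) (lam : Fin 3 → Fin 16 → ℝ) (φ : Fin 3 → Fin 16 → StateIdx → ℂ)
    (α : Fin 3) (j : Fin 16) (k : Fin n) :
    Matrix (StateIdx × QubitIdx (3 * n)) (StateIdx × QubitIdx (3 * n)) ℂ :=
  Pmat (φ α) j ⊗ₖ ((Complex.I * (lam α j : ℂ) / (2 * (h : ℂ))) • Smat n α (k.val + 1))

/-- The elastic-wave Hamiltonian `H = ∑_{α,j,k} H_jk^(α)`. -/
def Hfull (n : ℕ) (h : ℝ) (lam : Fin 3 → Fin 16 → ℝ) (φ : Fin 3 → Fin 16 → StateIdx → ℂ) :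
    Matrix (StateIdx × QubitIdx (3 * n)) (StateIdx × QubitIdx (3 * n)) ℂ :=
  ∑ α : Fin 3, ∑ j : Fin 16, ∑ k : Fin n, Hterm n h lam φ α j k

/-- Ordered product `f (m−1) * f (m−2) * ⋯ * f 0` (largest index leftmost). -/
def prodDesc {M : Type*} [Monoid M] {m : ℕ} (f : Fin m → M) : M :=
  ((List.finRange m).reverse.map f).prod

/-- Ordered product `f 0 * f 1 * ⋯ * f (m−1)` (smallest index leftmost). -/
def prodAsc {M : Type*} [Monoid M] {m : ℕ} (f : Fin m → M) : M :=
  ((List.finRange m).map f).prod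

/-- The first-order Trotter operator `U₁(τ)`: the ordered product of the factors
`exp(−i H_jk^(α) τ)` over all triples `(α, j, k)`, in decreasing lexicographic order
(the factor with the largest `(α, j, k)` leftmost, the factor with the smallest rightmost). -/
def U1 (n : ℕ) (h : ℝ) (lam : Fin 3 → Fin 16 → ℝ) (φ : Fin 3 → Fin 16 → StateIdx → ℂ)
    (τ : ℝ) : Matrix (StateIdx × QubitIdx (3 * n)) (StateIdx × QubitIdx (3 * n)) ℂ :=
  prodDesc fun α : Fin 3 => prodDesc fun j : Fin 16 => prodDesc fun k : Fin n =>
    NormedSpace.exp ((-(Complex.I * (τ : ℂ))) • Hterm n h lam φ α j k)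

/-- The reversed-order product of the factors `exp(−i H_jk^(α) τ)`: increasing
lexicographic order in `(α, j, k)`. -/
def U1rev (n : ℕ) (h : ℝ) (lam : Fin 3 → Fin 16 → ℝ) (φ : Fin 3 → Fin 16 → StateIdx → ℂ)
    (τ : ℝ) : Matrix (StateIdx × QubitIdx (3 * n)) (StateIdx × QubitIdx (3 * n)) ℂ :=
  prodAsc fun α : Fin 3 => prodAsc fun j : Fin 16 => prodAsc fun k : Fin n =>
    NormedSpace.exp ((-(Complex.I * (τ : ℂ))) • Hterm n h lam φ α j k)

/-- The second-order (symmetric) Trotter operator `U₂(τ) = U₁(τ/2) · Ũ₁(τ/2)`. -/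
def U2 (n : ℕ) (h : ℝ) (lam : Fin 3 → Fin 16 → ℝ) (φ : Fin 3 → Fin 16 → StateIdx → ℂ)
    (τ : ℝ) : Matrix (StateIdx × QubitIdx (3 * n)) (StateIdx × QubitIdx (3 * n)) ℂ :=
  U1 n h lam φ (τ / 2) * U1rev n h lam φ (τ / 2)

end

/-!
Each `S_k^(α)` equals `T_k - T_kᴴ`, where `T_k` is a tensor product of the partial isometries
`1`, `σ01`, `σ10`. For `j < k` the factors of `T_j` and `T_k` at position `n - j` are `σ01` and
`σ10`, and `σ01² = σ10² = 0`, so `T_j T_kᴴ = 0 = T_jᴴ T_k`. Hence `∑_k T_k` is again a partial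
isometry, of norm at most `1` because `WᴴW` is a projection and `‖W‖² = ‖WᴴW‖`; this gives
`‖D^(α)‖ ≤ 1/h`. Likewise `C^(α) C^(α)ᴴ = 1` gives `‖C^(α)‖ ≤ 1`, and the bound follows from
`‖A ⊗ B‖ ≤ ‖A‖ ‖B‖` and the triangle inequality over the three directions.
-/

namespace Matrix

variable {𝕜 : Type*} [RCLike 𝕜] {m n p : Type*} [Fintype m] [Fintype n] [Fintype p]

def IsPartialIsometry (W : Matrix m n 𝕜) : Prop :=
  W * Wᴴ * W = W

theorem isPartialIsometry_of_mul_conjTranspose_eq_one [DecidableEq m] {W : Matrix m n 𝕜}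
    (hW : W * Wᴴ = 1) : W.IsPartialIsometry := by
  rw [IsPartialIsometry, hW, Matrix.one_mul]

theorem isPartialIsometry_one_submatrix {m' : Type*} [Fintype m'] [DecidableEq m] [DecidableEq m']
    (e : m' ≃ m) : ((1 : Matrix m m 𝕜).submatrix e id).IsPartialIsometry := by
  apply isPartialIsometry_of_mul_conjTranspose_eq_one
  ext i j
  simp [mul_apply, one_apply]

theorem IsPartialIsometry.isStarProjection_conjTranspose_mul_self {W : Matrix m n 𝕜}
    (hW : W.IsPartialIsometry) : IsStarProjection (Wᴴ * W) where
  isIdempotentElem := by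
    rw [IsIdempotentElem, Matrix.mul_assoc, ← Matrix.mul_assoc W, hW]
  isSelfAdjoint := by
    rw [IsSelfAdjoint, star_eq_conjTranspose, conjTranspose_mul, conjTranspose_conjTranspose]

theorem IsPartialIsometry.l2_opNorm_le_one [DecidableEq n] {W : Matrix m n 𝕜}
    (hW : W.IsPartialIsometry) : ‖W‖ ≤ 1 := by
  have h := hW.isStarProjection_conjTranspose_mul_self.norm_le
  rw [l2_opNorm_conjTranspose_mul_self] at h
  nlinarith [norm_nonneg W]

theorem IsPartialIsometry.sum {ι : Type*} (s : Finset ι) {W : ι → Matrix m n 𝕜}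
    (hW : ∀ i ∈ s, (W i).IsPartialIsometry)
    (hleft : ∀ i ∈ s, ∀ j ∈ s, i ≠ j → W i * (W j)ᴴ = 0)
    (hright : ∀ i ∈ s, ∀ j ∈ s, i ≠ j → (W i)ᴴ * W j = 0) :
    (∑ i ∈ s, W i).IsPartialIsometry := by
  have hdiag : ∀ i ∈ s, W i * (∑ j ∈ s, W j)ᴴ * ∑ k ∈ s, W k = W i := fun i hi =>
    calc W i * (∑ j ∈ s, W j)ᴴ * ∑ k ∈ s, W k = W i * (W i)ᴴ * ∑ k ∈ s, W k := by
          rw [conjTranspose_sum, Matrix.mul_sum s _ (W i),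
            Finset.sum_eq_single_of_mem i hi fun j hj hji => hleft i hi j hj hji.symm]
      _ = W i * ((W i)ᴴ * W i) := by
          rw [Matrix.mul_assoc, Matrix.mul_sum s _ (W i)ᴴ,
            Finset.sum_eq_single_of_mem i hi fun k hk hki => hright i hi k hk hki.symm]
      _ = W i := by rw [← Matrix.mul_assoc, hW i hi]
  rw [IsPartialIsometry, Matrix.sum_mul, Matrix.sum_mul]
  exact Finset.sum_congr rfl hdiag

theorem l2_opNorm_submatrix_equiv_le [DecidableEq m] [DecidableEq n] {m' n' : Type*}
    [Fintype m'] [Fintype n'] [DecidableEq m'] [DecidableEq n'] (A : Matrix m n 𝕜)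
    (e₁ : m' ≃ m) (e₂ : n' ≃ n) : ‖A.submatrix e₁ e₂‖ ≤ ‖A‖ := by
  have hfac : A.submatrix e₁ e₂ =
      (1 : Matrix m m 𝕜).submatrix e₁ id * A * ((1 : Matrix n n 𝕜).submatrix e₂ id)ᴴ := by
    ext i j
    simp [mul_apply, one_apply]
  calc ‖A.submatrix e₁ e₂‖
      ≤ ‖(1 : Matrix m m 𝕜).submatrix e₁ id‖ * ‖A‖ * ‖((1 : Matrix n n 𝕜).submatrix e₂ id)ᴴ‖ := by
        rw [hfac]
        exact (l2_opNorm_mul _ _).trans (by gcongr; exact l2_opNorm_mul _ _)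
    _ ≤ 1 * ‖A‖ * 1 := by
        rw [l2_opNorm_conjTranspose]
        gcongr
        exacts [(isPartialIsometry_one_submatrix e₁).l2_opNorm_le_one,
          (isPartialIsometry_one_submatrix e₂).l2_opNorm_le_one]
    _ = ‖A‖ := by ring

theorem l2_opNorm_one_kronecker_le [DecidableEq n] [DecidableEq p] (B : Matrix m n 𝕜) :
    ‖(1 : Matrix p p 𝕜) ⊗ₖ B‖ ≤ ‖B‖ := by
  rw [l2_opNorm_def]
  refine ContinuousLinearMap.opNorm_le_bound _ (norm_nonneg B) fun v => ?_
  change ‖(EuclideanSpace.equiv _ 𝕜).symm (((1 : Matrix p p 𝕜) ⊗ₖ B) *ᵥ v)‖ ≤ _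
  set slice : p → EuclideanSpace 𝕜 n := fun k => WithLp.toLp 2 fun j => v (k, j)
  have hslice : ∀ k i, (((1 : Matrix p p 𝕜) ⊗ₖ B) *ᵥ v) (k, i) = (B *ᵥ slice k) i := by
    intro k i
    simp [mulVec, dotProduct, Fintype.sum_prod_type, one_apply, slice]
  refine (pow_le_pow_iff_left₀ (norm_nonneg _) (by positivity) two_ne_zero).1 ?_
  calc ‖(EuclideanSpace.equiv _ 𝕜).symm (((1 : Matrix p p 𝕜) ⊗ₖ B) *ᵥ v)‖ ^ 2
      = ∑ k, ‖(EuclideanSpace.equiv m 𝕜).symm (B *ᵥ slice k)‖ ^ 2 := by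
        simp only [EuclideanSpace.norm_sq_eq, Fintype.sum_prod_type]
        simp [hslice]
    _ ≤ ∑ k, (‖B‖ * ‖slice k‖) ^ 2 := by
        gcongr with k
        exact l2_opNorm_mulVec B (slice k)
    _ = (‖B‖ * ‖v‖) ^ 2 := by
        simp only [mul_pow, ← Finset.mul_sum, EuclideanSpace.norm_sq_eq, Fintype.sum_prod_type,
          slice]

theorem l2_opNorm_kronecker_one_le [DecidableEq m] [DecidableEq n] [DecidableEq p]
    (A : Matrix m n 𝕜) : ‖A ⊗ₖ (1 : Matrix p p 𝕜)‖ ≤ ‖A‖ := by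
  have hswap : A ⊗ₖ (1 : Matrix p p 𝕜) =
      ((1 : Matrix p p 𝕜) ⊗ₖ A).submatrix (Equiv.prodComm _ _) (Equiv.prodComm _ _) := by
    ext ⟨i, k⟩ ⟨j, l⟩
    simp [mul_comm]
  rw [hswap]
  exact (l2_opNorm_submatrix_equiv_le _ _ _).trans (l2_opNorm_one_kronecker_le A)

theorem l2_opNorm_kronecker_le {q : Type*} [Fintype q] [DecidableEq m] [DecidableEq n]
    [DecidableEq p] [DecidableEq q] (A : Matrix m n 𝕜) (B : Matrix p q 𝕜) :
    ‖A ⊗ₖ B‖ ≤ ‖A‖ * ‖B‖ :=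
  calc ‖A ⊗ₖ B‖ = ‖(A ⊗ₖ (1 : Matrix p p 𝕜)) * ((1 : Matrix n n 𝕜) ⊗ₖ B)‖ := by
        rw [← mul_kronecker_mul, Matrix.mul_one, Matrix.one_mul]
    _ ≤ ‖A ⊗ₖ (1 : Matrix p p 𝕜)‖ * ‖(1 : Matrix n n 𝕜) ⊗ₖ B‖ := l2_opNorm_mul _ _
    _ ≤ ‖A‖ * ‖B‖ := by
        gcongr
        exacts [l2_opNorm_kronecker_one_le A, l2_opNorm_one_kronecker_le B]

end Matrix

section TensorFamily

variable {N : ℕ}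

theorem tensorFamily_mul (f g : Fin N → Matrix (Fin 2) (Fin 2) ℂ) :
    tensorFamily f * tensorFamily g = tensorFamily fun i => f i * g i := by
  ext x y
  simp only [tensorFamily, mul_apply, of_apply, Fintype.prod_sum, ← Finset.prod_mul_distrib]

theorem tensorFamily_conjTranspose (f : Fin N → Matrix (Fin 2) (Fin 2) ℂ) :
    (tensorFamily f)ᴴ = tensorFamily fun i => (f i)ᴴ := by
  ext x y
  simp [tensorFamily, conjTranspose_apply, star_prod]

theorem tensorFamily_eq_zero {f : Fin N → Matrix (Fin 2) (Fin 2) ℂ} {i : Fin N} (hi : f i = 0) :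
    tensorFamily f = 0 := by
  ext x y
  simp only [tensorFamily, of_apply, Matrix.zero_apply]
  exact Finset.prod_eq_zero (Finset.mem_univ i) (by simp [hi])

theorem isPartialIsometry_tensorFamily {f : Fin N → Matrix (Fin 2) (Fin 2) ℂ}
    (hf : ∀ i, (f i).IsPartialIsometry) : (tensorFamily f).IsPartialIsometry := by
  rw [IsPartialIsometry, tensorFamily_conjTranspose, tensorFamily_mul, tensorFamily_mul]
  exact congrArg tensorFamily (funext hf)

end TensorFamily

theorem sigma01_conjTranspose : sigma01ᴴ = sigma10 := by
  ext a b
  fin_cases a <;> fin_cases b <;> simp [sigma01, sigma10]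

theorem sigma10_conjTranspose : sigma10ᴴ = sigma01 := by
  rw [← sigma01_conjTranspose, conjTranspose_conjTranspose]

theorem sigma01_mul_sigma01 : sigma01 * sigma01 = 0 := by
  ext a b
  fin_cases a <;> fin_cases b <;> simp [sigma01, mul_apply, Fin.sum_univ_two]

theorem sigma10_mul_sigma10 : sigma10 * sigma10 = 0 := by
  ext a b
  fin_cases a <;> fin_cases b <;> simp [sigma10, mul_apply, Fin.sum_univ_two]

theorem isPartialIsometry_sigma01 : sigma01.IsPartialIsometry := by
  rw [IsPartialIsometry, sigma01_conjTranspose]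
  ext a b
  fin_cases a <;> fin_cases b <;> simp [sigma01, sigma10, mul_apply, Fin.sum_univ_two]

theorem isPartialIsometry_sigma10 : sigma10.IsPartialIsometry := by
  rw [IsPartialIsometry, sigma10_conjTranspose]
  ext a b
  fin_cases a <;> fin_cases b <;> simp [sigma01, sigma10, mul_apply, Fin.sum_univ_two]

def blockFactor (n : ℕ) (α : Fin 3) (g : ℕ → Matrix (Fin 2) (Fin 2) ℂ) (i : Fin (3 * n)) :
    Matrix (Fin 2) (Fin 2) ℂ :=
  if i.val / n = α.val then g (i.val % n) else 1

/-- The operator `T_k` of the header: the `σ01 ⊗ σ10^⊗(k−1)` half of `S_k^(α)`. -/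
def shiftTerm (n : ℕ) (α : Fin 3) (k : ℕ) : Matrix (QubitIdx (3 * n)) (QubitIdx (3 * n)) ℂ :=
  tensorFamily (blockFactor n α (cellFactor n k sigma01 sigma10))

theorem Smat_eq_shiftTerm_sub_conjTranspose (n : ℕ) (α : Fin 3) (k : ℕ) :
    Smat n α k = shiftTerm n α k - (shiftTerm n α k)ᴴ := by
  rw [Smat, shiftTerm, tensorFamily_conjTranspose]
  congr 1
  congr 1
  funext i
  unfold blockFactor cellFactor
  split_ifs <;> simp [sigma01_conjTranspose, sigma10_conjTranspose]

theorem isPartialIsometry_shiftTerm (n : ℕ) (α : Fin 3) (k : ℕ) :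
    (shiftTerm n α k).IsPartialIsometry := by
  have hone : (1 : Matrix (Fin 2) (Fin 2) ℂ).IsPartialIsometry :=
    isPartialIsometry_of_mul_conjTranspose_eq_one (by simp)
  refine isPartialIsometry_tensorFamily fun i => ?_
  unfold blockFactor cellFactor
  split_ifs
  exacts [hone, isPartialIsometry_sigma01, isPartialIsometry_sigma10, hone]

theorem exists_blockFactor_sigma01_sigma10 {n j k : ℕ} (α : Fin 3) (hj : 0 < j) (hjk : j < k)
    (hk : k ≤ n) : ∃ i : Fin (3 * n),
      blockFactor n α (cellFactor n j sigma01 sigma10) i = sigma01 ∧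
        blockFactor n α (cellFactor n k sigma01 sigma10) i = sigma10 := by
  have hα := α.isLt
  have hαn : α.val * n ≤ 2 * n := Nat.mul_le_mul_right n (by omega)
  refine ⟨⟨α.val * n + (n - j), by omega⟩, ?_⟩
  have hdiv : (α.val * n + (n - j)) / n = α.val := by
    rw [Nat.mul_comm, Nat.mul_add_div (by omega), Nat.div_eq_of_lt (by omega), Nat.add_zero]
  have hmod : (α.val * n + (n - j)) % n = n - j := by
    rw [Nat.mul_comm, Nat.mul_add_mod, Nat.mod_eq_of_lt (by omega)]
  simp only [blockFactor, cellFactor, hdiv, hmod, if_true, lt_irrefl, if_false, true_and]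
  rw [if_neg (by omega), if_neg (by omega)]

theorem shiftTerm_orthogonal_of_ne {n : ℕ} (α : Fin 3) {j k : Fin n} (hjk : j ≠ k) :
    shiftTerm n α (j.val + 1) * (shiftTerm n α (k.val + 1))ᴴ = 0 ∧
      (shiftTerm n α (j.val + 1))ᴴ * shiftTerm n α (k.val + 1) = 0 := by
  wlog hlt : j < k generalizing j k
  · obtain ⟨hleft, hright⟩ := this hjk.symm (lt_of_le_of_ne (not_lt.1 hlt) hjk.symm)
    constructor
    · simpa using congrArg conjTranspose hleft
    · simpa using congrArg conjTranspose hright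
  obtain ⟨i, hj, hk⟩ :=
    exists_blockFactor_sigma01_sigma10 (n := n) α (Nat.succ_pos j) (by simpa using hlt) k.isLt
  simp only [shiftTerm, tensorFamily_conjTranspose, tensorFamily_mul]
  exact ⟨tensorFamily_eq_zero (i := i)
      (by simp [hj, hk, sigma10_conjTranspose, sigma01_mul_sigma01]),
    tensorFamily_eq_zero (i := i) (by simp [hj, hk, sigma01_conjTranspose, sigma10_mul_sigma10])⟩

theorem norm_sum_shiftTerm_le_one (n : ℕ) (α : Fin 3) :
    ‖∑ k : Fin n, shiftTerm n α (k.val + 1)‖ ≤ 1 :=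
  (IsPartialIsometry.sum (W := fun k : Fin n => shiftTerm n α (k.val + 1)) _
    (fun k _ => isPartialIsometry_shiftTerm n α (k.val + 1))
    (fun _ _ _ _ hjk => (shiftTerm_orthogonal_of_ne α hjk).1)
    (fun _ _ _ _ hjk => (shiftTerm_orthogonal_of_ne α hjk).2)).l2_opNorm_le_one

theorem norm_Dmat_le (n : ℕ) {h : ℝ} (hh : 0 < h) (α : Fin 3) : ‖Dmat n h α‖ ≤ 1 / h := by
  set T := ∑ k : Fin n, shiftTerm n α (k.val + 1)
  have hD : Dmat n h α = (1 / (2 * (h : ℂ))) • (T - Tᴴ) := by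
    simp only [Dmat, Smat_eq_shiftTerm_sub_conjTranspose, Finset.sum_sub_distrib, T,
      conjTranspose_sum]
  have hT : ‖T - Tᴴ‖ ≤ 2 :=
    calc ‖T - Tᴴ‖ ≤ ‖T‖ + ‖Tᴴ‖ := norm_sub_le _ _
      _ ≤ 1 + 1 := by
        rw [l2_opNorm_conjTranspose]
        gcongr <;> exact norm_sum_shiftTerm_le_one n α
      _ = 2 := by norm_num
  calc ‖Dmat n h α‖ = 1 / (2 * h) * ‖T - Tᴴ‖ := by
        rw [hD, norm_smul]
        simp [abs_of_pos hh]
    _ ≤ 1 / (2 * h) * 2 := by gcongr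
    _ = 1 / h := by field_simp

theorem Cmat_mul_conjTranspose (α : Fin 3) : Cmat α * (Cmat α)ᴴ = 1 := by
  fin_cases α <;>
    · ext i j
      fin_cases i <;> fin_cases j <;>
        simp [Cmat, mul_apply, Fin.sum_univ_six, one_apply]

theorem norm_Cmat_le_one (α : Fin 3) : ‖Cmat α‖ ≤ 1 :=
  (isPartialIsometry_of_mul_conjTranspose_eq_one (Cmat_mul_conjTranspose α)).l2_opNorm_le_one

theorem elastic_Lh_norm_bound_general
    (ρ : ℝ) (hρ : 0 < ρ) (S : Matrix (Fin 6) (Fin 6) ℂ) (hS : S.PosDef)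
    (n : ℕ) (h : ℝ) (hh : 0 < h) :
    ‖∑ α : Fin 3, (((ρ ^ (-(1 / 2) : ℝ) : ℝ) : ℂ) • (Cmat α * invSqrt hS)) ⊗ₖ
        Dmat n h α‖ ≤
      3 / h * (ρ ^ (-(1 / 2) : ℝ) * ‖invSqrt hS‖) := by
  set r := ρ ^ (-(1 / 2) : ℝ)
  have hr : 0 ≤ r := Real.rpow_nonneg hρ.le _
  have hterm : ∀ α, ‖((r : ℂ) • (Cmat α * invSqrt hS)) ⊗ₖ Dmat n h α‖ ≤
      r * ‖invSqrt hS‖ * (1 / h) := fun α =>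
    calc ‖((r : ℂ) • (Cmat α * invSqrt hS)) ⊗ₖ Dmat n h α‖
        ≤ r * (‖Cmat α‖ * ‖invSqrt hS‖) * ‖Dmat n h α‖ := by
          refine (l2_opNorm_kronecker_le _ _).trans ?_
          rw [norm_smul, Complex.norm_real, Real.norm_of_nonneg hr]
          gcongr
          exact l2_opNorm_mul _ _
      _ ≤ r * (1 * ‖invSqrt hS‖) * (1 / h) := by
          gcongr
          exacts [norm_Cmat_le_one α, norm_Dmat_le n hh α]
      _ = r * ‖invSqrt hS‖ * (1 / h) := by ring
  calc _ ≤ ∑ α : Fin 3, ‖((r : ℂ) • (Cmat α * invSqrt hS)) ⊗ₖ Dmat n h α‖ := norm_sum_le _ _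
    _ ≤ ∑ _α : Fin 3, r * ‖invSqrt hS‖ * (1 / h) := Finset.sum_le_sum fun α _ => hterm α
    _ = 3 / h * (r * ‖invSqrt hS‖) := by
        rw [Finset.sum_const, Finset.card_univ, Fintype.card_fin, nsmul_eq_mul]
        ring

/-- **Operator-norm bound on the semidiscrete elastic operator**
`L_h = ∑_α (ρ^(−1/2) C^(α) S_comp^(−1/2)) ⊗ D^(α)`:
`‖L_h‖ ≤ (3/h) ρ^(−1/2) ‖S_comp^(−1/2)‖`. -/
theorem elastic_Lh_norm_bound
    (ρ : ℝ) (hρ : 0 < ρ) (S : Matrix (Fin 6) (Fin 6) ℂ) (hS : S.PosDef)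
    (n : ℕ) (hn : 1 ≤ n) (h : ℝ) (hh : 0 < h) :
    ‖∑ α : Fin 3, (((ρ ^ (-(1 / 2) : ℝ) : ℝ) : ℂ) • (Cmat α * invSqrt hS)) ⊗ₖ
        Dmat n h α‖ ≤
      3 / h * (ρ ^ (-(1 / 2) : ℝ) * ‖invSqrt hS‖) :=
  elastic_Lh_norm_bound_general ρ hρ S hS n h hh
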